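/- arXiv:2502.19578 — 3 statements merged into one kernel-verified Lean document; each statement's English description precedes it below -/
import Mathlib

section
/- Let A be Hermitian with orthonormal eigenbasis {ψ_j} and eigenvalues |λ_1| > |λ_2| ≥ ... ≥ |λ_n|. Let v be a unit vector, θ = ∠(v, ψ_1) with 0 < θ < π/2, and let e be a perturbation vector. If ‖e‖/|λ_1| < (1 - |λ_2/λ_1|) · cos(θ)·sin(θ) / (cos(θ) + sin(θ)), then ∠(Av + e, ψ_1) < ∠(v, ψ_1), i.e., tan ∠(Av + e, ψ_1) < tan ∠(v, ψ_1). -/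
/-!
In the eigenbasis `ψ`, `A` multiplies the `ψ 0`-coordinate of `v` by `lam 0` and every other
coordinate by a scalar of modulus at most `‖lam 1‖`, so `‖P (A v)‖ = ‖lam 0‖ cos θ` and
`‖A v - P (A v)‖ ≤ ‖lam 1‖ sin θ`. Both `P` and `1 - P` are contractions, so adding `e` moves
each of these by at most `‖e‖`, and the bound on `‖e‖` is a rearrangement of
`(‖lam 1‖ sin θ + ‖e‖) cos θ < (‖lam 0‖ cos θ - ‖e‖) sin θ`.
-/

open scoped InnerProductSpace

section

variable {𝕜 E ι : Type*} [RCLike 𝕜] [NormedAddCommGroup E] [InnerProductSpace 𝕜 E]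

theorem norm_inner_smul_le {u : E} (hu : ‖u‖ = 1) (x : E) : ‖⟪u, x⟫_𝕜 • u‖ ≤ ‖x‖ := by
  simpa [norm_smul, hu] using norm_inner_le_norm (𝕜 := 𝕜) u x

theorem norm_sub_inner_smul_le {u : E} (hu : ‖u‖ = 1) (x : E) : ‖x - ⟪u, x⟫_𝕜 • u‖ ≤ ‖x‖ := by
  have h := (𝕜 ∙ u)ᗮ.norm_starProjection_apply_le x
  rwa [Submodule.starProjection_orthogonal, sub_apply,
    Submodule.starProjection_unit_singleton 𝕜 hu] at h

theorem norm_inner_smul_sub_norm_le {u : E} (hu : ‖u‖ = 1) (y e : E) :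
    ‖⟪u, y⟫_𝕜 • u‖ - ‖e‖ ≤ ‖⟪u, y + e⟫_𝕜 • u‖ := by
  rw [inner_add_right, add_smul]
  grw [← norm_sub_le_norm_add, norm_inner_smul_le (𝕜 := 𝕜) hu e]

theorem norm_add_sub_inner_smul_le {u : E} (hu : ‖u‖ = 1) (y e : E) :
    ‖y + e - ⟪u, y + e⟫_𝕜 • u‖ ≤ ‖y - ⟪u, y⟫_𝕜 • u‖ + ‖e‖ := by
  have hsplit : y + e - ⟪u, y + e⟫_𝕜 • u = (y - ⟪u, y⟫_𝕜 • u) + (e - ⟪u, e⟫_𝕜 • u) := by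
    rw [inner_add_right, add_smul]; abel
  rw [hsplit]
  grw [norm_add_le, norm_sub_inner_smul_le (𝕜 := 𝕜) hu e]

variable [Fintype ι] (b : OrthonormalBasis ι 𝕜 E)

theorem OrthonormalBasis.norm_le_mul_norm_of_forall_norm_inner_le {x y : E} {L : ℝ} (hL : 0 ≤ L)
    (h : ∀ j, ‖⟪b j, y⟫_𝕜‖ ≤ L * ‖⟪b j, x⟫_𝕜‖) : ‖y‖ ≤ L * ‖x‖ := by
  refine le_of_pow_le_pow_left₀ two_ne_zero (by positivity) ?_
  rw [mul_pow, ← b.sum_sq_norm_inner_right, ← b.sum_sq_norm_inner_right, Finset.mul_sum]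
  gcongr with j
  rw [← mul_pow]
  gcongr
  exact h j

theorem OrthonormalBasis.inner_map_eq_mul_inner {T : E →ₗ[𝕜] E} {μ : ι → 𝕜}
    (hT : ∀ j, T (b j) = μ j • b j) (j : ι) (x : E) : ⟪b j, T x⟫_𝕜 = μ j * ⟪b j, x⟫_𝕜 := by
  classical
  conv_lhs => rw [← b.sum_repr' x]
  simp [hT, inner_sum, inner_smul_right, b.inner_eq_ite, mul_comm]

theorem OrthonormalBasis.norm_sub_inner_smul_map_le {T : E →ₗ[𝕜] E} {μ : ι → 𝕜}
    (hT : ∀ j, T (b j) = μ j • b j) {i : ι} {L : ℝ} (hL : 0 ≤ L) (hμ : ∀ j, j ≠ i → ‖μ j‖ ≤ L)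
    (x : E) : ‖T x - ⟪b i, T x⟫_𝕜 • b i‖ ≤ L * ‖x - ⟪b i, x⟫_𝕜 • b i‖ := by
  classical
  refine b.norm_le_mul_norm_of_forall_norm_inner_le hL fun j => ?_
  simp only [inner_sub_right, inner_smul_right, b.inner_eq_ite, b.inner_map_eq_mul_inner hT]
  by_cases hj : j = i
  · simp [hj]
  · simp only [hj, if_false, mul_zero, sub_zero, norm_mul]
    exact mul_le_mul_of_nonneg_right (hμ j hj) (norm_nonneg _)

theorem Orthonormal.exists_orthonormalBasis_coe_eq [FiniteDimensional 𝕜 E] {ψ : ι → E}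
    (hψ : Orthonormal 𝕜 ψ) (hcard : Fintype.card ι = Module.finrank 𝕜 E) :
    ∃ b : OrthonormalBasis ι 𝕜 E, ⇑b = ψ := by
  refine ⟨.mk hψ ?_, OrthonormalBasis.coe_mk _ _⟩
  exact (hψ.linearIndependent.span_eq_top_of_card_eq_finrank' hcard).ge

end

theorem div_lt_div_of_perturbation_lt {L₀ L₁ c s ε p q : ℝ} (hL₁ : 0 ≤ L₁) (hgap : L₁ < L₀)
    (hc : 0 ≤ c) (hs : 0 ≤ s) (hε : 0 ≤ ε)
    (he : ε / L₀ < (1 - L₁ / L₀) * (c * s) / (c + s))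
    (hp : L₀ * c - ε ≤ p) (hq : q ≤ L₁ * s + ε) : q / p < s / c := by
  have hL₀ : 0 < L₀ := hL₁.trans_lt hgap
  -- the left side of `he` is nonnegative, so `c * s` cannot vanish
  have hcs : 0 < c * s := by
    by_contra! h
    have : (1 - L₁ / L₀) * (c * s) / (c + s) ≤ 0 :=
      div_nonpos_of_nonpos_of_nonneg
        (mul_nonpos_of_nonneg_of_nonpos (by rw [sub_nonneg, div_le_one hL₀]; exact hgap.le) h)
        (by positivity)
    linarith [div_nonneg hε hL₀.le]
  have hc' : 0 < c := lt_of_le_of_ne hc (by rintro rfl; simp at hcs)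
  have hs' : 0 < s := lt_of_le_of_ne hs (by rintro rfl; simp at hcs)
  have key : ε * (c + s) < (L₀ - L₁) * (c * s) := by
    rw [div_lt_div_iff₀ hL₀ (by positivity)] at he
    calc ε * (c + s) < (1 - L₁ / L₀) * (c * s) * L₀ := he
      _ = (L₀ - L₁) * (c * s) := by field_simp
  have hden : 0 < L₀ * c - ε := by nlinarith
  calc q / p ≤ (L₁ * s + ε) / (L₀ * c - ε) := div_le_div₀ (by positivity) hq hden hp
    _ < s / c := by rw [div_lt_div_iff₀ hden hc']; nlinarith

theorem stmt2_general {n : ℕ} (A : Matrix (Fin (n + 2)) (Fin (n + 2)) ℂ)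
    (ψ : Fin (n + 2) → EuclideanSpace ℂ (Fin (n + 2)))
    (hortho : Orthonormal ℂ ψ)
    (lam : Fin (n + 2) → ℂ)
    (heig : ∀ j, Matrix.toEuclideanLin A (ψ j) = lam j • ψ j)
    (hgap : ‖lam 1‖ < ‖lam 0‖)
    (hord : ∀ j, j ≠ 0 → ‖lam j‖ ≤ ‖lam 1‖)
    (v e : EuclideanSpace ℂ (Fin (n + 2)))
    (θ : ℝ)
    (hcos : Real.cos θ = ‖(inner ℂ (ψ 0) v : ℂ) • ψ 0‖)
    (hsin : Real.sin θ = ‖v - (inner ℂ (ψ 0) v : ℂ) • ψ 0‖)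
    (he : ‖e‖ / ‖lam 0‖
        < (1 - ‖lam 1‖ / ‖lam 0‖)
          * (Real.cos θ * Real.sin θ) / (Real.cos θ + Real.sin θ)) :
    let P : EuclideanSpace ℂ (Fin (n + 2)) → EuclideanSpace ℂ (Fin (n + 2)) :=
      fun w => (inner ℂ (ψ 0) w : ℂ) • ψ 0
    let z : EuclideanSpace ℂ (Fin (n + 2)) := Matrix.toEuclideanLin A v + e
    ‖z - P z‖ / ‖P z‖ < ‖v - P v‖ / ‖P v‖ := by
  intro P z
  obtain ⟨b, rfl⟩ := hortho.exists_orthonormalBasis_coe_eq (by simp)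
  set T := Matrix.toEuclideanLin A
  have hu : ‖b 0‖ = 1 := b.orthonormal.1 0
  have hPz : ‖lam 0‖ * Real.cos θ - ‖e‖ ≤ ‖P z‖ := by
    have hPTv : ‖P (T v)‖ = ‖lam 0‖ * Real.cos θ := by
      simp only [P, b.inner_map_eq_mul_inner heig, mul_smul, norm_smul, hcos]
    exact hPTv ▸ norm_inner_smul_sub_norm_le hu (T v) e
  have hQz : ‖z - P z‖ ≤ ‖lam 1‖ * Real.sin θ + ‖e‖ := by
    grw [norm_add_sub_inner_smul_le hu (T v) e,
      b.norm_sub_inner_smul_map_le heig (norm_nonneg _) hord v, ← hsin]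
  calc ‖z - P z‖ / ‖P z‖ < Real.sin θ / Real.cos θ :=
        div_lt_div_of_perturbation_lt (norm_nonneg _) hgap (hcos ▸ norm_nonneg _)
          (hsin ▸ norm_nonneg _) (norm_nonneg _) he hPz hQz
    _ = ‖v - P v‖ / ‖P v‖ := by rw [hcos, hsin]

/-- Inexact power iteration makes progress: for Hermitian `A` with orthonormal
eigenbasis `ψ`, eigenvalues `|λ₀| > |λ₁| ≥ |λ_j|` (j ≥ 1), unit vector `v` at angle `θ` to
`ψ₀` (with `cos θ = ‖P v‖ > 0`, `sin θ = ‖P⊥ v‖ > 0`), and perturbation `e` satisfying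
`‖e‖/|λ₀| < (1 - |λ₁/λ₀|)·cos θ·sin θ/(cos θ + sin θ)`, we have
`tan ∠(Av + e, ψ₀) < tan ∠(v, ψ₀)`. -/
theorem stmt2 {n : ℕ} (A : Matrix (Fin (n + 2)) (Fin (n + 2)) ℂ)
    (hA : A.IsHermitian)
    (ψ : Fin (n + 2) → EuclideanSpace ℂ (Fin (n + 2)))
    (hortho : Orthonormal ℂ ψ)
    (lam : Fin (n + 2) → ℂ)
    (heig : ∀ j, Matrix.toEuclideanLin A (ψ j) = lam j • ψ j)
    (hgap : ‖lam 1‖ < ‖lam 0‖)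
    (hord : ∀ j, j ≠ 0 → ‖lam j‖ ≤ ‖lam 1‖)
    (v e : EuclideanSpace ℂ (Fin (n + 2)))
    (hv : ‖v‖ = 1)
    (θ : ℝ) (hθ0 : 0 < θ) (hθ1 : θ < Real.pi / 2)
    (hcos : Real.cos θ = ‖(inner ℂ (ψ 0) v : ℂ) • ψ 0‖)
    (hsin : Real.sin θ = ‖v - (inner ℂ (ψ 0) v : ℂ) • ψ 0‖)
    (he : ‖e‖ / ‖lam 0‖
        < (1 - ‖lam 1‖ / ‖lam 0‖)
          * (Real.cos θ * Real.sin θ) / (Real.cos θ + Real.sin θ)) :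
    let P : EuclideanSpace ℂ (Fin (n + 2)) → EuclideanSpace ℂ (Fin (n + 2)) :=
      fun w => (inner ℂ (ψ 0) w : ℂ) • ψ 0
    let z : EuclideanSpace ℂ (Fin (n + 2)) := Matrix.toEuclideanLin A v + e
    ‖z - P z‖ / ‖P z‖ < ‖v - P v‖ / ‖P v‖ :=
  stmt2_general A ψ hortho lam heig hgap hord v e θ hcos hsin he
end

section
/- Let A be Hermitian with eigendecomposition A = Ψ Λ Ψ^*, eigenvalues ordered |λ_1| ≥ ... ≥ |λ_m| > |λ_{m+1}| ≥ ... ≥ |λ_n| with λ_m ≠ 0. Let Ψ_{≤m} contain the first m eigenvectors and Ψ_{>m} the rest. For V ∈ ℂ^{n×m} with Ψ_{≤m}^* V invertible, define T_V = Ψ_{>m}^* V (Ψ_{≤m}^* V)^{-1}. Then σ_1(T_{AV}) ≤ |λ_{m+1}/λ_m| · σ_1(T_V), where σ_1 denotes the largest singular value. -/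
/-!
Since `A` is Hermitian, `Ψᴴ A = Λ̄ Ψᴴ` for each eigenvector block, so
`T_{AV} = Λ̄₂ T_V Λ̄₁⁻¹` (the factor `Ψ₁ᴴ V` cancels inside the inverse). Submultiplicativity of
the spectral norm and `‖diag d‖ = maxᵢ |dᵢ|` then give the factor `|λ_{m+1}| / |λ_m|`.
-/

open Matrix
open scoped Matrix.Norms.L2Operator

namespace Matrix

variable {n p q : Type*} [Fintype n] [Fintype p] [DecidableEq p] [Fintype q] [DecidableEq q]

theorem conjTranspose_mul_eq_diagonal_star_mul {α : Type*} [CommSemiring α] [StarRing α]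
    {A : Matrix n n α} (hA : A.IsHermitian) {Ψ : Matrix n p α} {d : p → α}
    (h : A * Ψ = Ψ * diagonal d) : Ψᴴ * A = diagonal (star d) * Ψᴴ := by
  simpa only [conjTranspose_mul, hA.eq, diagonal_conjTranspose] using congrArg conjTranspose h

/-- `T_V = Ψ₂ᴴ V (Ψ₁ᴴ V)⁻¹`; its spectral norm is the tangent of the largest principal angle
between `range V` and `range Ψ₁`. -/
noncomputable def principalTangent {𝕜 : Type*} [RCLike 𝕜] (Ψ1 : Matrix n p 𝕜)
    (Ψ2 : Matrix n q 𝕜) (V : Matrix n p 𝕜) : Matrix q p 𝕜 :=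
  Ψ2ᴴ * V * (Ψ1ᴴ * V)⁻¹

variable {𝕜 : Type*} [RCLike 𝕜]

theorem principalTangent_mul_of_mul_eq_mul_diagonal {A : Matrix n n 𝕜} (hA : A.IsHermitian)
    {Ψ1 : Matrix n p 𝕜} {Ψ2 : Matrix n q 𝕜} {d1 : p → 𝕜} {d2 : q → 𝕜}
    (h1 : A * Ψ1 = Ψ1 * diagonal d1) (h2 : A * Ψ2 = Ψ2 * diagonal d2) (V : Matrix n p 𝕜) :
    principalTangent Ψ1 Ψ2 (A * V)
      = diagonal (star d2) * principalTangent Ψ1 Ψ2 V * (diagonal (star d1))⁻¹ := by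
  rw [principalTangent, principalTangent, ← Matrix.mul_assoc Ψ1ᴴ, ← Matrix.mul_assoc Ψ2ᴴ,
    conjTranspose_mul_eq_diagonal_star_mul hA h1, conjTranspose_mul_eq_diagonal_star_mul hA h2,
    Matrix.mul_assoc _ Ψ1ᴴ V, mul_inv_rev]
  simp only [Matrix.mul_assoc]

theorem l2_opNorm_diagonal_le {d : p → 𝕜} {c : ℝ} (hc : 0 ≤ c) (hd : ∀ i, ‖d i‖ ≤ c) :
    ‖diagonal d‖ ≤ c := by
  rw [l2_opNorm_diagonal]
  exact (pi_norm_le_iff_of_nonneg hc).2 hd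

theorem l2_opNorm_inv_diagonal_le {d : p → 𝕜} {c : ℝ} (hc : 0 < c) (hd : ∀ i, c ≤ ‖d i‖) :
    ‖(diagonal d)⁻¹‖ ≤ c⁻¹ := by
  have hinv : (diagonal d)⁻¹ = diagonal d⁻¹ := inv_eq_left_inv <| by
    rw [diagonal_mul_diagonal, ← diagonal_one]
    exact congrArg diagonal <| funext fun i =>
      inv_mul_cancel₀ <| norm_pos_iff.1 <| hc.trans_le (hd i)
  rw [hinv]
  exact l2_opNorm_diagonal_le (inv_nonneg.2 hc.le) fun i => by
    simpa only [Pi.inv_apply, norm_inv] using inv_anti₀ hc (hd i)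

theorem l2_opNorm_diagonal_mul_mul_inv_diagonal_le {a : q → 𝕜} {b : p → 𝕜} {α β : ℝ}
    (hα : 0 ≤ α) (hβ : 0 < β) (ha : ∀ j, ‖a j‖ ≤ α) (hb : ∀ i, β ≤ ‖b i‖) (T : Matrix q p 𝕜) :
    ‖diagonal a * T * (diagonal b)⁻¹‖ ≤ α / β * ‖T‖ :=
  calc ‖diagonal a * T * (diagonal b)⁻¹‖
      ≤ ‖diagonal a‖ * ‖T‖ * ‖(diagonal b)⁻¹‖ :=
        (l2_opNorm_mul _ _).trans (by gcongr; exact l2_opNorm_mul _ _)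
    _ ≤ α * ‖T‖ * β⁻¹ := by
        gcongr
        exacts [l2_opNorm_diagonal_le hα ha, l2_opNorm_inv_diagonal_le hβ hb]
    _ = α / β * ‖T‖ := by ring

end Matrix

theorem stmt5_general {m k : ℕ}
    (A : Matrix (Fin (m + 1 + (k + 1))) (Fin (m + 1 + (k + 1))) ℂ)
    (hA : A.IsHermitian)
    (Ψ1 : Matrix (Fin (m + 1 + (k + 1))) (Fin (m + 1)) ℂ)
    (Ψ2 : Matrix (Fin (m + 1 + (k + 1))) (Fin (k + 1)) ℂ)
    (lam1 : Fin (m + 1) → ℂ) (lam2 : Fin (k + 1) → ℂ)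
    (heig1 : A * Ψ1 = Ψ1 * Matrix.diagonal lam1)
    (heig2 : A * Ψ2 = Ψ2 * Matrix.diagonal lam2)
    (hord1 : ∀ i i' : Fin (m + 1), i ≤ i' → ‖lam1 i'‖ ≤ ‖lam1 i‖)
    (hord2 : ∀ j j' : Fin (k + 1), j ≤ j' → ‖lam2 j'‖ ≤ ‖lam2 j‖)
    (hm0 : lam1 (Fin.last m) ≠ 0)
    (V : Matrix (Fin (m + 1 + (k + 1))) (Fin (m + 1)) ℂ) :
    ‖Ψ2ᴴ * (A * V) * (Ψ1ᴴ * (A * V))⁻¹‖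
      ≤ (‖lam2 0‖ / ‖lam1 (Fin.last m)‖)
        * ‖Ψ2ᴴ * V * (Ψ1ᴴ * V)⁻¹‖ := by
  change ‖principalTangent Ψ1 Ψ2 (A * V)‖ ≤ _ * ‖principalTangent Ψ1 Ψ2 V‖
  rw [principalTangent_mul_of_mul_eq_mul_diagonal hA heig1 heig2]
  refine l2_opNorm_diagonal_mul_mul_inv_diagonal_le (norm_nonneg _) (norm_pos_iff.2 hm0)
    (fun j => ?_) (fun i => ?_) _
  · simpa only [Pi.star_apply, norm_star] using hord2 0 j (Fin.zero_le j)
  · simpa only [Pi.star_apply, norm_star] using hord1 i (Fin.last m) (Fin.le_last i)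

/-- One step of exact subspace iteration contracts the tangent of the largest
principal angle. `A` is Hermitian with unitary eigenvector matrix `Ψ = [Ψ₁, Ψ₂]`
(`Ψ₁` the first `m+1` eigenvectors, `Ψ₂` the rest), eigenvalue magnitudes non-increasing in
each block, with strict gap `|λ_{m+1}| < |λ_m|` (here `λ_m = lam1 (Fin.last m)` is the last
head eigenvalue and `λ_{m+1} = lam2 0` the first tail eigenvalue) and `λ_m ≠ 0`. For `V`
with `Ψ₁ᴴ V` invertible and `T_V = Ψ₂ᴴ V (Ψ₁ᴴ V)⁻¹`, the largest singular value (spectral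
norm) satisfies `σ₁(T_{AV}) ≤ |λ_{m+1}/λ_m| · σ₁(T_V)`. -/
theorem stmt5 {m k : ℕ}
    (A : Matrix (Fin (m + 1 + (k + 1))) (Fin (m + 1 + (k + 1))) ℂ)
    (hA : A.IsHermitian)
    (Ψ1 : Matrix (Fin (m + 1 + (k + 1))) (Fin (m + 1)) ℂ)
    (Ψ2 : Matrix (Fin (m + 1 + (k + 1))) (Fin (k + 1)) ℂ)
    (hU11 : Ψ1ᴴ * Ψ1 = 1) (hU22 : Ψ2ᴴ * Ψ2 = 1) (hU12 : Ψ1ᴴ * Ψ2 = 0)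
    (hcomplete : Ψ1 * Ψ1ᴴ + Ψ2 * Ψ2ᴴ = 1)
    (lam1 : Fin (m + 1) → ℂ) (lam2 : Fin (k + 1) → ℂ)
    (heig1 : A * Ψ1 = Ψ1 * Matrix.diagonal lam1)
    (heig2 : A * Ψ2 = Ψ2 * Matrix.diagonal lam2)
    (hord1 : ∀ i i' : Fin (m + 1), i ≤ i' → ‖lam1 i'‖ ≤ ‖lam1 i‖)
    (hord2 : ∀ j j' : Fin (k + 1), j ≤ j' → ‖lam2 j'‖ ≤ ‖lam2 j‖)
    (hgap : ‖lam2 0‖ < ‖lam1 (Fin.last m)‖)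
    (hm0 : lam1 (Fin.last m) ≠ 0)
    (V : Matrix (Fin (m + 1 + (k + 1))) (Fin (m + 1)) ℂ)
    (hV : IsUnit (Ψ1ᴴ * V)) :
    ‖Ψ2ᴴ * (A * V) * (Ψ1ᴴ * (A * V))⁻¹‖
      ≤ (‖lam2 0‖ / ‖lam1 (Fin.last m)‖)
        * ‖Ψ2ᴴ * V * (Ψ1ᴴ * V)⁻¹‖ :=
  stmt5_general A hA Ψ1 Ψ2 lam1 lam2 heig1 heig2 hord1 hord2 hm0 V
end

section
/- Let A be Hermitian with orthonormal eigenbasis {ψ_j} and real eigenvalues λ_1 < λ_2 ≤ ... ≤ λ_n, and let p be any polynomial with |p(λ_1)| > max_{j ≥ 2} |p(λ_j)|. Then for any vector v with ⟨ψ_1, v⟩ ≠ 0, tan ∠(p(A)v, ψ_1) ≤ (max_{j≥2}|p(λ_j)| / |p(λ_1)|) · tan ∠(v, ψ_1), where tan ∠(w, ψ_1) = ‖(I − ψ_1ψ_1^*)w‖ / ‖ψ_1ψ_1^* w‖. -/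
/-!
In the orthonormal eigenbasis `ψ` the operator `p(A)` is diagonal with entries `p(λⱼ)`. Hence it
commutes with the projection onto `ψ₀`: the `ψ₀`-component of `v` is multiplied by `p(λ₀)`, and by
Parseval the orthogonal component is shrunk by a factor at most `max_{j ≠ 0} |p(λⱼ)|`.
-/

open Polynomial
open scoped InnerProductSpace

theorem Matrix.toEuclideanLin_aeval {𝕜 n : Type*} [RCLike 𝕜] [Fintype n] [DecidableEq n]
    (A : Matrix n n 𝕜) (p : 𝕜[X]) :
    Matrix.toEuclideanLin (aeval A p) = aeval (Matrix.toEuclideanLin A) p :=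
  (aeval_algHom_apply (Matrix.toLinAlgEquiv (EuclideanSpace.basisFun n 𝕜).toBasis) A p).symm

section

variable {𝕜 E ι : Type*} [RCLike 𝕜] [NormedAddCommGroup E] [InnerProductSpace 𝕜 E] [Fintype ι]

theorem Orthonormal.exists_orthonormalBasis_of_card_eq_finrank [FiniteDimensional 𝕜 E]
    {v : ι → E} (hv : Orthonormal 𝕜 v) (card_eq : Fintype.card ι = Module.finrank 𝕜 E) :
    ∃ b : OrthonormalBasis ι 𝕜 E, ⇑b = v :=
  ⟨.mk hv (hv.linearIndependent.span_eq_top_of_card_eq_finrank' card_eq).ge,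
    OrthonormalBasis.coe_mk _ _⟩

variable (𝕜) in
/-- Meaningful for a unit vector `u`; where `w ⊥ u` the division by zero makes it `0`. -/
noncomputable def tanAngle (u w : E) : ℝ :=
  ‖w - ⟪u, w⟫_𝕜 • u‖ / ‖⟪u, w⟫_𝕜 • u‖

namespace OrthonormalBasis

variable (b : OrthonormalBasis ι 𝕜 E) {f : E →ₗ[𝕜] E} {μ : ι → 𝕜}

theorem inner_apply_of_apply_eq_smul (hf : ∀ i, f (b i) = μ i • b i) (i : ι) (w : E) :
    ⟪b i, f w⟫_𝕜 = μ i * ⟪b i, w⟫_𝕜 := by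
  have : (innerₛₗ 𝕜 (b i)).comp f = μ i • innerₛₗ 𝕜 (b i) :=
    b.toBasis.ext fun j => by
      rcases eq_or_ne i j with rfl | hij
      · simp [hf, inner_smul_right]
      · simp [hf, inner_smul_right, b.orthonormal.2 hij]
  exact LinearMap.congr_fun this w

theorem norm_apply_le_of_apply_eq_smul (hf : ∀ i, f (b i) = μ i • b i) {M : ℝ} (hM0 : 0 ≤ M)
    {w : E} (hM : ∀ i, ⟪b i, w⟫_𝕜 ≠ 0 → ‖μ i‖ ≤ M) : ‖f w‖ ≤ M * ‖w‖ := by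
  refine le_of_sq_le_sq ?_ (by positivity)
  rw [mul_pow, ← b.sum_sq_norm_inner_right, ← b.sum_sq_norm_inner_right, Finset.mul_sum]
  refine Finset.sum_le_sum fun i _ => ?_
  rw [b.inner_apply_of_apply_eq_smul hf, norm_mul, mul_pow]
  by_cases hi : ⟪b i, w⟫_𝕜 = 0
  · simp [hi]
  · gcongr
    exact hM i hi

theorem norm_sub_inner_smul_apply_le (hf : ∀ i, f (b i) = μ i • b i) (i₀ : ι) {M : ℝ}
    (hM0 : 0 ≤ M) (hM : ∀ i ≠ i₀, ‖μ i‖ ≤ M) (w : E) :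
    ‖f w - ⟪b i₀, f w⟫_𝕜 • b i₀‖ ≤ M * ‖w - ⟪b i₀, w⟫_𝕜 • b i₀‖ := by
  have hcomm : f w - ⟪b i₀, f w⟫_𝕜 • b i₀ = f (w - ⟪b i₀, w⟫_𝕜 • b i₀) := by
    rw [map_sub, map_smul, hf, b.inner_apply_of_apply_eq_smul hf, smul_smul, mul_comm]
  rw [hcomm]
  refine b.norm_apply_le_of_apply_eq_smul hf hM0 fun i hi => hM i ?_
  rintro rfl
  exact hi (by simp [inner_sub_right, inner_smul_right])

theorem tanAngle_apply_le (hf : ∀ i, f (b i) = μ i • b i) (i₀ : ι) {M : ℝ}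
    (hM0 : 0 ≤ M) (hM : ∀ i ≠ i₀, ‖μ i‖ ≤ M) (w : E) :
    tanAngle 𝕜 (b i₀) (f w) ≤ M / ‖μ i₀‖ * tanAngle 𝕜 (b i₀) w := by
  have hnum := b.norm_sub_inner_smul_apply_le hf i₀ hM0 hM w
  unfold tanAngle
  rw [b.inner_apply_of_apply_eq_smul hf, mul_smul] at hnum ⊢
  rw [norm_smul (μ i₀), div_mul_div_comm]
  exact div_le_div_of_nonneg_right hnum (by positivity)

end OrthonormalBasis

end

theorem stmt18_general {n : ℕ} (A : Matrix (Fin (n + 2)) (Fin (n + 2)) ℂ)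
    (ψ : Fin (n + 2) → EuclideanSpace ℂ (Fin (n + 2)))
    (hortho : Orthonormal ℂ ψ)
    (lam : Fin (n + 2) → ℝ)
    (heig : ∀ j, Matrix.toEuclideanLin A (ψ j) = (lam j : ℂ) • ψ j)
    (p : Polynomial ℂ)
    (v : EuclideanSpace ℂ (Fin (n + 2))) :
    let P : EuclideanSpace ℂ (Fin (n + 2)) → EuclideanSpace ℂ (Fin (n + 2)) :=
      fun w => (inner ℂ (ψ 0) w : ℂ) • ψ 0
    let z : EuclideanSpace ℂ (Fin (n + 2)) :=
      Matrix.toEuclideanLin (Polynomial.aeval A p) v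
    ‖z - P z‖ / ‖P z‖
      ≤ ((⨆ j : {j : Fin (n + 2) // j ≠ 0}, ‖p.eval ((lam j.1 : ℝ) : ℂ)‖)
          / ‖p.eval ((lam 0 : ℝ) : ℂ)‖)
        * (‖v - P v‖ / ‖P v‖) := by
  intro P z
  obtain ⟨b, rfl⟩ := hortho.exists_orthonormalBasis_of_card_eq_finrank (by simp)
  have hf (j : Fin (n + 2)) :
      Matrix.toEuclideanLin (aeval A p) (b j) = p.eval (lam j : ℂ) • b j := by
    rw [Matrix.toEuclideanLin_aeval]
    exact Module.End.aeval_apply_of_hasEigenvector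
      ⟨Module.End.mem_eigenspace_iff.2 (heig j), b.orthonormal.ne_zero j⟩
  have hM (j : Fin (n + 2)) (hj : j ≠ 0) :
      ‖p.eval (lam j : ℂ)‖ ≤ ⨆ i : {i : Fin (n + 2) // i ≠ 0}, ‖p.eval (lam i.1 : ℂ)‖ :=
    le_ciSup (f := fun i : {i : Fin (n + 2) // i ≠ 0} => ‖p.eval (lam i.1 : ℂ)‖)
      (Set.finite_range _).bddAbove ⟨j, hj⟩
  exact b.tanAngle_apply_le hf 0 (Real.iSup_nonneg fun _ => norm_nonneg _) hM v

/-- Polynomial-filtered power iteration bound. `A` Hermitian with orthonormal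
eigenbasis `ψ` and real eigenvalues `λ₀ < λ₁ ≤ … ≤ λ_{n-1}`; `p` a polynomial with
`|p(λ₀)| > max_{j ≠ 0} |p(λ_j)|`. Then for any `v` with `⟨ψ₀, v⟩ ≠ 0`,
`tan ∠(p(A)v, ψ₀) ≤ (max_{j ≠ 0}|p(λ_j)|/|p(λ₀)|) · tan ∠(v, ψ₀)`,
where `tan ∠(w, ψ₀) = ‖(I − ψ₀ψ₀ᴴ)w‖/‖ψ₀ψ₀ᴴ w‖`. -/
theorem stmt18 {n : ℕ} (A : Matrix (Fin (n + 2)) (Fin (n + 2)) ℂ)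
    (hA : A.IsHermitian)
    (ψ : Fin (n + 2) → EuclideanSpace ℂ (Fin (n + 2)))
    (hortho : Orthonormal ℂ ψ)
    (lam : Fin (n + 2) → ℝ)
    (heig : ∀ j, Matrix.toEuclideanLin A (ψ j) = (lam j : ℂ) • ψ j)
    (hmono : Monotone lam)
    (hstrict : lam 0 < lam 1)
    (p : Polynomial ℂ)
    (hp : (⨆ j : {j : Fin (n + 2) // j ≠ 0}, ‖p.eval ((lam j.1 : ℝ) : ℂ)‖)
        < ‖p.eval ((lam 0 : ℝ) : ℂ)‖)
    (v : EuclideanSpace ℂ (Fin (n + 2)))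
    (hv : (inner ℂ (ψ 0) v : ℂ) ≠ 0) :
    let P : EuclideanSpace ℂ (Fin (n + 2)) → EuclideanSpace ℂ (Fin (n + 2)) :=
      fun w => (inner ℂ (ψ 0) w : ℂ) • ψ 0
    let z : EuclideanSpace ℂ (Fin (n + 2)) :=
      Matrix.toEuclideanLin (Polynomial.aeval A p) v
    ‖z - P z‖ / ‖P z‖
      ≤ ((⨆ j : {j : Fin (n + 2) // j ≠ 0}, ‖p.eval ((lam j.1 : ℝ) : ℂ)‖)
          / ‖p.eval ((lam 0 : ℝ) : ℂ)‖)
        * (‖v - P v‖ / ‖P v‖) :=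
  stmt18_general A ψ hortho lam heig p v
end
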